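/- Each of the six functions J₀₁, J₀₂, J₀₃, J₁₂, J₁₃, J₂₃ of the geodesic polar realization Poisson commutes with the kinetic energy T at every point of D: {J_{μν}, T} = 0 for all the six generators. -/

import Mathlib

namespace Paper
noncomputable section

/-- The κ-dependent cosine Cκ(x) = ∑ (−κ)^l x^{2l}/(2l)!. -/
def Ck (κ x : ℝ) : ℝ := ∑' l : ℕ, (-κ) ^ l * x ^ (2 * l) / (Nat.factorial (2 * l) : ℝ)

/-- The κ-dependent sine Sκ(x) = ∑ (−κ)^l x^{2l+1}/(2l+1)!. -/
def Sk (κ x : ℝ) : ℝ := ∑' l : ℕ, (-κ) ^ l * x ^ (2 * l + 1) / (Nat.factorial (2 * l + 1) : ℝ)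

/-- The κ-dependent tangent Tκ(x) = Sκ(x)/Cκ(x). -/
def Tk (κ x : ℝ) : ℝ := Sk κ x / Ck κ x

/-- Phase space ℝ³ × ℝ³ ≃ ℝ⁶ with canonical coordinates
`(r, θ, φ, p_r, p_θ, p_φ) = (x 0, x 1, x 2, x 3, x 4, x 5)`. -/
abbrev Pt := Fin 6 → ℝ

/-- Partial derivative in the i-th coordinate direction. -/
def pd (f : Pt → ℝ) (i : Fin 6) (x : Pt) : ℝ := fderiv ℝ f x (Pi.single i 1)

/-- Canonical Poisson bracket {f,g} = ∑_{q} (∂f/∂q ∂g/∂p_q − ∂g/∂q ∂f/∂p_q). -/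
def pb (f g : Pt → ℝ) (x : Pt) : ℝ :=
  ∑ i : Fin 3,
    (pd f ⟨i.1, by omega⟩ x * pd g ⟨i.1 + 3, by omega⟩ x
      - pd g ⟨i.1, by omega⟩ x * pd f ⟨i.1 + 3, by omega⟩ x)

/-- Gradient of a function on phase space, as a vector in ℝ⁶. -/
def grad (f : Pt → ℝ) (x : Pt) : Fin 6 → ℝ := fun i => pd f i x

/-- The open domain D where Sκ₁(r), Cκ₁(r), Sκ₂(θ), Cκ₂(θ), cos φ, sin φ are nonzero. -/
def D (κ₁ κ₂ : ℝ) : Set Pt :=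
  {x | Sk κ₁ (x 0) ≠ 0 ∧ Ck κ₁ (x 0) ≠ 0 ∧ Sk κ₂ (x 1) ≠ 0 ∧ Ck κ₂ (x 1) ≠ 0 ∧
       Real.cos (x 2) ≠ 0 ∧ Real.sin (x 2) ≠ 0}

/-- J₀₁ = Cκ₂(θ)p_r − (Sκ₂(θ)/Tκ₁(r))p_θ. -/
def J01 (κ₁ κ₂ : ℝ) (x : Pt) : ℝ :=
  Ck κ₂ (x 1) * x 3 - (Sk κ₂ (x 1) / Tk κ₁ (x 0)) * x 4

/-- J₀₂. -/
def J02 (κ₁ κ₂ : ℝ) (x : Pt) : ℝ :=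
  κ₂ * Sk κ₂ (x 1) * Real.cos (x 2) * x 3
    + (Ck κ₂ (x 1) * Real.cos (x 2) / Tk κ₁ (x 0)) * x 4
    - (Real.sin (x 2) / (Tk κ₁ (x 0) * Sk κ₂ (x 1))) * x 5

/-- J₀₃. -/
def J03 (κ₁ κ₂ : ℝ) (x : Pt) : ℝ :=
  κ₂ * Sk κ₂ (x 1) * Real.sin (x 2) * x 3
    + (Ck κ₂ (x 1) * Real.sin (x 2) / Tk κ₁ (x 0)) * x 4
    + (Real.cos (x 2) / (Tk κ₁ (x 0) * Sk κ₂ (x 1))) * x 5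

/-- J₁₂ = cos φ·p_θ − (sin φ/Tκ₂(θ))p_φ. -/
def J12 (κ₂ : ℝ) (x : Pt) : ℝ :=
  Real.cos (x 2) * x 4 - (Real.sin (x 2) / Tk κ₂ (x 1)) * x 5

/-- J₁₃ = sin φ·p_θ + (cos φ/Tκ₂(θ))p_φ. -/
def J13 (κ₂ : ℝ) (x : Pt) : ℝ :=
  Real.sin (x 2) * x 4 + (Real.cos (x 2) / Tk κ₂ (x 1)) * x 5

/-- J₂₃ = p_φ. -/
def J23 (x : Pt) : ℝ := x 5

/-- Kinetic energy T. -/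
def Tkin (κ₁ κ₂ : ℝ) (x : Pt) : ℝ :=
  (1 / 2) * ((x 3) ^ 2 + (x 4) ^ 2 / (κ₂ * Sk κ₁ (x 0) ^ 2)
    + (x 5) ^ 2 / (κ₂ * Sk κ₁ (x 0) ^ 2 * Sk κ₂ (x 1) ^ 2))

/-- The superintegrable potential U with arbitrary radial function F. -/
def U (κ₁ κ₂ : ℝ) (F : ℝ → ℝ) (β₁ β₂ β₃ : ℝ) (x : Pt) : ℝ :=
  F (x 0) + (1 / Sk κ₁ (x 0) ^ 2) *
    (β₁ / Ck κ₂ (x 1) ^ 2 + β₂ / (Sk κ₂ (x 1) ^ 2 * Real.cos (x 2) ^ 2)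
      + β₃ / (Sk κ₂ (x 1) ^ 2 * Real.sin (x 2) ^ 2))

/-- Integral I₁₂. -/
def I12 (κ₂ β₁ β₂ : ℝ) (x : Pt) : ℝ :=
  (Real.cos (x 2) * x 4 - (Real.sin (x 2) / Tk κ₂ (x 1)) * x 5) ^ 2
    + 2 * β₁ * κ₂ ^ 2 * Tk κ₂ (x 1) ^ 2 * Real.cos (x 2) ^ 2
    + 2 * β₂ * κ₂ / (Tk κ₂ (x 1) ^ 2 * Real.cos (x 2) ^ 2)

/-- Integral I₁₃. -/
def I13 (κ₂ β₁ β₃ : ℝ) (x : Pt) : ℝ :=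
  (Real.sin (x 2) * x 4 + (Real.cos (x 2) / Tk κ₂ (x 1)) * x 5) ^ 2
    + 2 * β₁ * κ₂ ^ 2 * Tk κ₂ (x 1) ^ 2 * Real.sin (x 2) ^ 2
    + 2 * β₃ * κ₂ / (Tk κ₂ (x 1) ^ 2 * Real.sin (x 2) ^ 2)

/-- Integral I₂₃. -/
def I23 (κ₂ β₂ β₃ : ℝ) (x : Pt) : ℝ :=
  (x 5) ^ 2 + 2 * β₂ * κ₂ * Real.tan (x 2) ^ 2 + 2 * β₃ * κ₂ / Real.tan (x 2) ^ 2

/-- Integral I₁₂₃. -/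
def I123 (κ₂ β₁ β₂ β₃ : ℝ) (x : Pt) : ℝ :=
  (x 4) ^ 2 + (x 5) ^ 2 / Sk κ₂ (x 1) ^ 2 + 2 * β₁ * κ₂ / Ck κ₂ (x 1) ^ 2
    + 2 * β₂ * κ₂ / (Sk κ₂ (x 1) ^ 2 * Real.cos (x 2) ^ 2)
    + 2 * β₃ * κ₂ / (Sk κ₂ (x 1) ^ 2 * Real.sin (x 2) ^ 2)

/-- The Smorodinsky–Winternitz Hamiltonian H^SW. -/
def HSW (κ₁ κ₂ β₀ β₁ β₂ β₃ : ℝ) (x : Pt) : ℝ :=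
  Tkin κ₁ κ₂ x + β₀ * Tk κ₁ (x 0) ^ 2 + (1 / Sk κ₁ (x 0) ^ 2) *
    (β₁ / Ck κ₂ (x 1) ^ 2 + β₂ / (Sk κ₂ (x 1) ^ 2 * Real.cos (x 2) ^ 2)
      + β₃ / (Sk κ₂ (x 1) ^ 2 * Real.sin (x 2) ^ 2))

/-- Integral I₀₁ of H^SW. -/
def I01 (κ₁ κ₂ β₀ β₁ : ℝ) (x : Pt) : ℝ :=
  J01 κ₁ κ₂ x ^ 2 + 2 * β₀ * Tk κ₁ (x 0) ^ 2 * Ck κ₂ (x 1) ^ 2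
    + 2 * β₁ / (Tk κ₁ (x 0) ^ 2 * Ck κ₂ (x 1) ^ 2)

/-- Integral I₀₂ of H^SW. -/
def I02 (κ₁ κ₂ β₀ β₂ : ℝ) (x : Pt) : ℝ :=
  J02 κ₁ κ₂ x ^ 2 + 2 * β₀ * κ₂ ^ 2 * Tk κ₁ (x 0) ^ 2 * Sk κ₂ (x 1) ^ 2 * Real.cos (x 2) ^ 2
    + 2 * β₂ * κ₂ / (Tk κ₁ (x 0) ^ 2 * Sk κ₂ (x 1) ^ 2 * Real.cos (x 2) ^ 2)

/-- Integral I₀₃ of H^SW. -/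
def I03 (κ₁ κ₂ β₀ β₃ : ℝ) (x : Pt) : ℝ :=
  J03 κ₁ κ₂ x ^ 2 + 2 * β₀ * κ₂ ^ 2 * Tk κ₁ (x 0) ^ 2 * Sk κ₂ (x 1) ^ 2 * Real.sin (x 2) ^ 2
    + 2 * β₃ * κ₂ / (Tk κ₁ (x 0) ^ 2 * Sk κ₂ (x 1) ^ 2 * Real.sin (x 2) ^ 2)

/-- Generalized Kepler–Coulomb Hamiltonian H^GKC₁ = T + U^GKC₁. -/
def HGKC1 (κ₁ κ₂ k β₂ β₃ : ℝ) (x : Pt) : ℝ :=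
  Tkin κ₁ κ₂ x - k / Tk κ₁ (x 0)
    + (1 / (Sk κ₁ (x 0) ^ 2 * Sk κ₂ (x 1) ^ 2)) *
        (β₂ / Real.cos (x 2) ^ 2 + β₃ / Real.sin (x 2) ^ 2)

/-- Generalized Kepler–Coulomb Hamiltonian H^GKC₂ = T + U^GKC₂. -/
def HGKC2 (κ₁ κ₂ k β₁ β₃ : ℝ) (x : Pt) : ℝ :=
  Tkin κ₁ κ₂ x - k / Tk κ₁ (x 0)
    + (1 / Sk κ₁ (x 0) ^ 2) *
        (β₁ / Ck κ₂ (x 1) ^ 2 + β₃ / (Sk κ₂ (x 1) ^ 2 * Real.sin (x 2) ^ 2))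

/-- Generalized Kepler–Coulomb Hamiltonian H^GKC₃ = T + U^GKC₃. -/
def HGKC3 (κ₁ κ₂ k β₁ β₂ : ℝ) (x : Pt) : ℝ :=
  Tkin κ₁ κ₂ x - k / Tk κ₁ (x 0)
    + (1 / Sk κ₁ (x 0) ^ 2) *
        (β₁ / Ck κ₂ (x 1) ^ 2 + β₂ / (Sk κ₂ (x 1) ^ 2 * Real.cos (x 2) ^ 2))

/-- The function L₁. -/
def L1 (κ₁ κ₂ k β₂ β₃ : ℝ) (x : Pt) : ℝ :=
  -(J02 κ₁ κ₂ x * J12 κ₂ x) - J03 κ₁ κ₂ x * J13 κ₂ x + k * κ₂ * Ck κ₂ (x 1)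
    - (2 * κ₂ * Ck κ₂ (x 1) / (Tk κ₁ (x 0) * Sk κ₂ (x 1) ^ 2)) *
        (β₂ / Real.cos (x 2) ^ 2 + β₃ / Real.sin (x 2) ^ 2)

/-- The function L₂. -/
def L2 (κ₁ κ₂ k β₁ β₃ : ℝ) (x : Pt) : ℝ :=
  J01 κ₁ κ₂ x * J12 κ₂ x - J03 κ₁ κ₂ x * J23 x + k * κ₂ * Sk κ₂ (x 1) * Real.cos (x 2)
    - (2 * κ₂ * Real.cos (x 2) / Tk κ₁ (x 0)) *
        (β₁ * Sk κ₂ (x 1) / Ck κ₂ (x 1) ^ 2 + β₃ / (Sk κ₂ (x 1) * Real.sin (x 2) ^ 2))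

/-- The function L₃. -/
def L3 (κ₁ κ₂ k β₁ β₂ : ℝ) (x : Pt) : ℝ :=
  J01 κ₁ κ₂ x * J13 κ₂ x + J02 κ₁ κ₂ x * J23 x + k * κ₂ * Sk κ₂ (x 1) * Real.sin (x 2)
    - (2 * κ₂ * Real.sin (x 2) / Tk κ₁ (x 0)) *
        (β₁ * Sk κ₂ (x 1) / Ck κ₂ (x 1) ^ 2 + β₂ / (Sk κ₂ (x 1) * Real.cos (x 2) ^ 2))

/-! For `c : ℂ` with `c ^ 2 = κ ≠ 0` the series `Cκ x`, `Sκ x` are `cos (c x)` and `sin (c x) / c`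
(and `1`, `x` when `κ = 0`), so `Sκ' = Cκ`, `Cκ' = -κ Sκ` and `Cκ² + κ Sκ² = 1`. Each generator is
linear in the momenta and `T` is a diagonal quadratic form in them, so `{J, T}` is an explicit
rational expression in `Cκᵢ`, `Sκᵢ`, `cos φ`, `sin φ` and the momenta; it vanishes identically,
for `J₀₂` and `J₀₃` only after using `Cκ₂² + κ₂ Sκ₂² = 1`. -/

theorem _root_.HasFDerivAt.div {𝕜 E : Type*} [NontriviallyNormedField 𝕜] [NormedAddCommGroup E]
    [NormedSpace 𝕜 E] {c d : E → 𝕜} {c' d' : E →L[𝕜] 𝕜} {x : E} (hc : HasFDerivAt c c' x)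
    (hd : HasFDerivAt d d' x) (hx : d x ≠ 0) :
    HasFDerivAt (fun y => c y / d y) ((d x ^ 2)⁻¹ • (d x • c' - c x • d')) x := by
  simp_rw [div_eq_mul_inv]
  refine (hc.mul ((hasDerivAt_inv hx).comp_hasFDerivAt x hd)).congr_fderiv ?_
  ext v
  simp only [Function.comp_apply, add_apply, sub_apply, smul_apply, smul_eq_mul, neg_mul, mul_neg]
  field_simp
  ring

theorem _root_.HasDerivAt.hasFDerivAt_comp_apply {𝕜 ι : Type*} [NontriviallyNormedField 𝕜]
    [Fintype ι] {h : 𝕜 → 𝕜} {h' : 𝕜} {x : ι → 𝕜} (i : ι) (hh : HasDerivAt h h' (x i)) :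
    HasFDerivAt (fun y : ι → 𝕜 => h (y i)) (h' • ContinuousLinearMap.proj (R := 𝕜) i) x :=
  hh.comp_hasFDerivAt x (hasFDerivAt_apply i x)

theorem Ck_zero_left (x : ℝ) : Ck 0 x = 1 := by
  rw [Ck, tsum_eq_single 0 fun l hl => by simp [zero_pow hl]]
  simp

theorem Sk_zero_left (x : ℝ) : Sk 0 x = x := by
  rw [Sk, tsum_eq_single 0 fun l hl => by simp [zero_pow hl]]
  simp

theorem exists_ne_zero_sq_eq_ofReal {κ : ℝ} (hκ : κ ≠ 0) : ∃ c : ℂ, c ≠ 0 ∧ c ^ 2 = κ := by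
  obtain ⟨c, hc⟩ := IsAlgClosed.exists_pow_nat_eq (κ : ℂ) two_pos
  exact ⟨c, by rintro rfl; simp_all [eq_comm], hc⟩

theorem ofReal_Ck {κ : ℝ} {c : ℂ} (hc : c ^ 2 = κ) (x : ℝ) :
    (Ck κ x : ℂ) = Complex.cos (c * x) := by
  rw [Ck, Complex.ofReal_tsum]
  refine HasSum.tsum_eq ?_
  convert Complex.hasSum_cos (c * x) using 2 with l
  push_cast
  rw [mul_pow, pow_mul c, hc]
  ring

theorem ofReal_Sk {κ : ℝ} {c : ℂ} (hc₀ : c ≠ 0) (hc : c ^ 2 = κ) (x : ℝ) :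
    (Sk κ x : ℂ) = Complex.sin (c * x) / c := by
  rw [Sk, Complex.ofReal_tsum]
  refine HasSum.tsum_eq ?_
  have hterm : (fun l : ℕ => (((-κ) ^ l * x ^ (2 * l + 1) / (2 * l + 1).factorial : ℝ) : ℂ)) =
      fun l => (-1) ^ l * (c * x) ^ (2 * l + 1) / (2 * l + 1).factorial / c := by
    funext l
    push_cast
    rw [mul_pow, pow_succ c, pow_mul c, hc]
    field_simp
    ring
  rw [hterm]
  exact (Complex.hasSum_sin (c * x)).div_const c

theorem Ck_sq_add_mul_Sk_sq (κ x : ℝ) : Ck κ x ^ 2 + κ * Sk κ x ^ 2 = 1 := by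
  obtain rfl | hκ := eq_or_ne κ 0
  · simp [Ck_zero_left]
  obtain ⟨c, hc₀, hc⟩ := exists_ne_zero_sq_eq_ofReal hκ
  apply Complex.ofReal_injective
  push_cast
  rw [ofReal_Ck hc, ofReal_Sk hc₀ hc, ← hc]
  field_simp
  exact Complex.cos_sq_add_sin_sq _

theorem hasDerivAt_Sk (κ x : ℝ) : HasDerivAt (Sk κ) (Ck κ x) x := by
  obtain rfl | hκ := eq_or_ne κ 0
  · simpa [funext Sk_zero_left, Ck_zero_left] using hasDerivAt_id' x
  obtain ⟨c, hc₀, hc⟩ := exists_ne_zero_sq_eq_ofReal hκ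
  have h := (((hasDerivAt_id (x : ℂ)).const_mul c).csin.div_const c).real_of_complex
  have hS : Sk κ = fun t : ℝ => (Complex.sin (c * t) / c).re := by
    funext t
    rw [← ofReal_Sk hc₀ hc, Complex.ofReal_re]
  rw [hS, ← Complex.ofReal_re (Ck κ x), ofReal_Ck hc]
  simpa [mul_div_assoc, hc₀] using h

theorem hasDerivAt_Ck (κ x : ℝ) : HasDerivAt (Ck κ) (-κ * Sk κ x) x := by
  obtain rfl | hκ := eq_or_ne κ 0
  · simpa [funext Ck_zero_left] using hasDerivAt_const x (1 : ℝ)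
  obtain ⟨c, hc₀, hc⟩ := exists_ne_zero_sq_eq_ofReal hκ
  have h := ((hasDerivAt_id (x : ℂ)).const_mul c).ccos.real_of_complex
  have hC : Ck κ = fun t : ℝ => (Complex.cos (c * t)).re := by
    funext t
    rw [← ofReal_Ck hc, Complex.ofReal_re]
  have hval : ((-κ * Sk κ x : ℝ) : ℂ) = -Complex.sin (c * x) * (c * 1) := by
    push_cast
    rw [ofReal_Sk hc₀ hc, ← hc]
    field_simp
  rw [hC, ← Complex.ofReal_re (-κ * Sk κ x), hval]
  simpa using h

theorem hasDerivAt_Tk {κ x : ℝ} (hx : Ck κ x ≠ 0) : HasDerivAt (Tk κ) (1 / Ck κ x ^ 2) x := by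
  refine ((hasDerivAt_Sk κ x).div (hasDerivAt_Ck κ x) hx).congr_deriv ?_
  rw [← Ck_sq_add_mul_Sk_sq κ x]
  ring

theorem grad_eq_of_hasFDerivAt {f : Pt → ℝ} {L : Pt →L[ℝ] ℝ} {x : Pt} (h : HasFDerivAt f L x) :
    grad f x = fun i => L (Pi.single i 1) := by
  funext i
  rw [grad, pd, h.fderiv]

theorem pb_eq_grad (f g : Pt → ℝ) (x : Pt) :
    pb f g x = grad f x 0 * grad g x 3 - grad g x 0 * grad f x 3
      + (grad f x 1 * grad g x 4 - grad g x 1 * grad f x 4)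
      + (grad f x 2 * grad g x 5 - grad g x 2 * grad f x 5) := by
  simp only [pb, grad, Fin.sum_univ_three]
  rfl

section Brackets

variable {κ₁ κ₂ : ℝ} {x : Pt}

theorem grad_Tkin (hκ₂ : κ₂ ≠ 0) (hr : Sk κ₁ (x 0) ≠ 0) (hθ : Sk κ₂ (x 1) ≠ 0) :
    grad (Tkin κ₁ κ₂) x =
      ![-(x 4 ^ 2 + x 5 ^ 2 / Sk κ₂ (x 1) ^ 2) * Ck κ₁ (x 0) / (κ₂ * Sk κ₁ (x 0) ^ 3),
        -(x 5 ^ 2 * Ck κ₂ (x 1)) / (κ₂ * Sk κ₁ (x 0) ^ 2 * Sk κ₂ (x 1) ^ 3),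
        0, x 3, x 4 / (κ₂ * Sk κ₁ (x 0) ^ 2),
        x 5 / (κ₂ * Sk κ₁ (x 0) ^ 2 * Sk κ₂ (x 1) ^ 2)] := by
  have S₁ := (HasDerivAt.hasFDerivAt_comp_apply 0 ((hasDerivAt_Sk κ₁ (x 0)).pow 2)).const_mul κ₂
  have S₂ := HasDerivAt.hasFDerivAt_comp_apply 1 ((hasDerivAt_Sk κ₂ (x 1)).pow 2)
  have p := fun i : Fin 6 => hasFDerivAt_apply (𝕜 := ℝ) i x
  have hT : HasFDerivAt (Tkin κ₁ κ₂) _ x :=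
    ((((p 3).pow 2).add (((p 4).pow 2).div S₁ (by simp [*]))).add
      (((p 5).pow 2).div (S₁.mul S₂) (by simp [*]))).const_mul (1 / 2)
  rw [grad_eq_of_hasFDerivAt hT]
  funext i
  fin_cases i <;>
    simp only [Fin.zero_eta, Fin.mk_one, Fin.reduceFinMk, Fin.isValue, Fin.reduceEq,
      Matrix.cons_val, add_apply, sub_apply, smul_apply, ContinuousLinearMap.proj_apply,
      Pi.single_apply, Pi.pow_apply, Pi.mul_apply, ↓reduceIte, smul_eq_mul, nsmul_eq_mul,
      Nat.cast_ofNat, Nat.add_one_sub_one, pow_one, mul_one, mul_zero] <;>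
    field_simp <;> ring

theorem pb_J01_Tkin (hκ₂ : κ₂ ≠ 0) (hx : x ∈ D κ₁ κ₂) :
    pb (J01 κ₁ κ₂) (Tkin κ₁ κ₂) x = 0 := by
  obtain ⟨hSr, hCr, hSθ, -, -, -⟩ := hx
  have S := HasDerivAt.hasFDerivAt_comp_apply 1 (hasDerivAt_Sk κ₂ (x 1))
  have C := HasDerivAt.hasFDerivAt_comp_apply 1 (hasDerivAt_Ck κ₂ (x 1))
  have T := HasDerivAt.hasFDerivAt_comp_apply 0 (hasDerivAt_Tk hCr)
  have p := fun i : Fin 6 => hasFDerivAt_apply (𝕜 := ℝ) i x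
  have hJ : HasFDerivAt (J01 κ₁ κ₂) _ x :=
    (C.mul (p 3)).sub ((S.div T (div_ne_zero hSr hCr)).mul (p 4))
  rw [pb_eq_grad, grad_eq_of_hasFDerivAt hJ, grad_Tkin hκ₂ hSr hSθ]
  simp only [Tk, Fin.isValue, Fin.reduceEq, Matrix.cons_val, add_apply, sub_apply, smul_apply,
    ContinuousLinearMap.proj_apply, Pi.single_apply, ↓reduceIte, smul_eq_mul, mul_one, mul_zero]
  field_simp
  ring

theorem pb_J02_Tkin (hκ₂ : κ₂ ≠ 0) (hx : x ∈ D κ₁ κ₂) :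
    pb (J02 κ₁ κ₂) (Tkin κ₁ κ₂) x = 0 := by
  obtain ⟨hSr, hCr, hSθ, -, -, -⟩ := hx
  have hTr : Tk κ₁ (x 0) ≠ 0 := div_ne_zero hSr hCr
  have S := HasDerivAt.hasFDerivAt_comp_apply 1 (hasDerivAt_Sk κ₂ (x 1))
  have C := HasDerivAt.hasFDerivAt_comp_apply 1 (hasDerivAt_Ck κ₂ (x 1))
  have T := HasDerivAt.hasFDerivAt_comp_apply 0 (hasDerivAt_Tk hCr)
  have cos := HasDerivAt.hasFDerivAt_comp_apply 2 (Real.hasDerivAt_cos (x 2))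
  have sin := HasDerivAt.hasFDerivAt_comp_apply 2 (Real.hasDerivAt_sin (x 2))
  have p := fun i : Fin 6 => hasFDerivAt_apply (𝕜 := ℝ) i x
  have hJ : HasFDerivAt (J02 κ₁ κ₂) _ x :=
    ((((S.const_mul κ₂).mul cos).mul (p 3)).add (((C.mul cos).div T hTr).mul (p 4))).sub
      ((sin.div (T.mul S) (mul_ne_zero hTr hSθ)).mul (p 5))
  rw [pb_eq_grad, grad_eq_of_hasFDerivAt hJ, grad_Tkin hκ₂ hSr hSθ]
  simp only [Tk, Fin.isValue, Fin.reduceEq, Matrix.cons_val, add_apply, sub_apply, smul_apply,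
    ContinuousLinearMap.proj_apply, Pi.single_apply, Pi.mul_apply, ↓reduceIte, smul_eq_mul,
    mul_one, mul_zero]
  field_simp
  linear_combination Ck κ₁ (x 0) * Real.cos (x 2) * x 5 ^ 2 * Sk κ₁ (x 0) ^ 2 * Sk κ₂ (x 1) ^ 2
    * Ck_sq_add_mul_Sk_sq κ₂ (x 1)

theorem pb_J03_Tkin (hκ₂ : κ₂ ≠ 0) (hx : x ∈ D κ₁ κ₂) :
    pb (J03 κ₁ κ₂) (Tkin κ₁ κ₂) x = 0 := by
  obtain ⟨hSr, hCr, hSθ, -, -, -⟩ := hx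
  have hTr : Tk κ₁ (x 0) ≠ 0 := div_ne_zero hSr hCr
  have S := HasDerivAt.hasFDerivAt_comp_apply 1 (hasDerivAt_Sk κ₂ (x 1))
  have C := HasDerivAt.hasFDerivAt_comp_apply 1 (hasDerivAt_Ck κ₂ (x 1))
  have T := HasDerivAt.hasFDerivAt_comp_apply 0 (hasDerivAt_Tk hCr)
  have cos := HasDerivAt.hasFDerivAt_comp_apply 2 (Real.hasDerivAt_cos (x 2))
  have sin := HasDerivAt.hasFDerivAt_comp_apply 2 (Real.hasDerivAt_sin (x 2))
  have p := fun i : Fin 6 => hasFDerivAt_apply (𝕜 := ℝ) i x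
  have hJ : HasFDerivAt (J03 κ₁ κ₂) _ x :=
    ((((S.const_mul κ₂).mul sin).mul (p 3)).add (((C.mul sin).div T hTr).mul (p 4))).add
      ((cos.div (T.mul S) (mul_ne_zero hTr hSθ)).mul (p 5))
  rw [pb_eq_grad, grad_eq_of_hasFDerivAt hJ, grad_Tkin hκ₂ hSr hSθ]
  simp only [Tk, Fin.isValue, Fin.reduceEq, Matrix.cons_val, add_apply, sub_apply, smul_apply,
    ContinuousLinearMap.proj_apply, Pi.single_apply, Pi.mul_apply, ↓reduceIte, smul_eq_mul,
    mul_one, mul_zero]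
  field_simp
  linear_combination Ck κ₁ (x 0) * Real.sin (x 2) * x 5 ^ 2 * Sk κ₁ (x 0) ^ 2 * Sk κ₂ (x 1) ^ 2
    * Ck_sq_add_mul_Sk_sq κ₂ (x 1)

theorem pb_J12_Tkin (hκ₂ : κ₂ ≠ 0) (hx : x ∈ D κ₁ κ₂) :
    pb (J12 κ₂) (Tkin κ₁ κ₂) x = 0 := by
  obtain ⟨hSr, -, hSθ, hCθ, -, -⟩ := hx
  have T := HasDerivAt.hasFDerivAt_comp_apply 1 (hasDerivAt_Tk hCθ)
  have cos := HasDerivAt.hasFDerivAt_comp_apply 2 (Real.hasDerivAt_cos (x 2))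
  have sin := HasDerivAt.hasFDerivAt_comp_apply 2 (Real.hasDerivAt_sin (x 2))
  have p := fun i : Fin 6 => hasFDerivAt_apply (𝕜 := ℝ) i x
  have hJ : HasFDerivAt (J12 κ₂) _ x :=
    (cos.mul (p 4)).sub ((sin.div T (div_ne_zero hSθ hCθ)).mul (p 5))
  rw [pb_eq_grad, grad_eq_of_hasFDerivAt hJ, grad_Tkin hκ₂ hSr hSθ]
  simp only [Tk, Fin.isValue, Fin.reduceEq, Matrix.cons_val, add_apply, sub_apply, smul_apply,
    ContinuousLinearMap.proj_apply, Pi.single_apply, ↓reduceIte, smul_eq_mul, mul_one, mul_zero]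
  field_simp
  ring

theorem pb_J13_Tkin (hκ₂ : κ₂ ≠ 0) (hx : x ∈ D κ₁ κ₂) :
    pb (J13 κ₂) (Tkin κ₁ κ₂) x = 0 := by
  obtain ⟨hSr, -, hSθ, hCθ, -, -⟩ := hx
  have T := HasDerivAt.hasFDerivAt_comp_apply 1 (hasDerivAt_Tk hCθ)
  have cos := HasDerivAt.hasFDerivAt_comp_apply 2 (Real.hasDerivAt_cos (x 2))
  have sin := HasDerivAt.hasFDerivAt_comp_apply 2 (Real.hasDerivAt_sin (x 2))
  have p := fun i : Fin 6 => hasFDerivAt_apply (𝕜 := ℝ) i x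
  have hJ : HasFDerivAt (J13 κ₂) _ x :=
    (sin.mul (p 4)).add ((cos.div T (div_ne_zero hSθ hCθ)).mul (p 5))
  rw [pb_eq_grad, grad_eq_of_hasFDerivAt hJ, grad_Tkin hκ₂ hSr hSθ]
  simp only [Tk, Fin.isValue, Fin.reduceEq, Matrix.cons_val, add_apply, sub_apply, smul_apply,
    ContinuousLinearMap.proj_apply, Pi.single_apply, ↓reduceIte, smul_eq_mul, mul_one, mul_zero]
  field_simp
  ring

theorem pb_J23_Tkin (hκ₂ : κ₂ ≠ 0) (hr : Sk κ₁ (x 0) ≠ 0) (hθ : Sk κ₂ (x 1) ≠ 0) :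
    pb J23 (Tkin κ₁ κ₂) x = 0 := by
  rw [pb_eq_grad, grad_eq_of_hasFDerivAt (f := J23) (hasFDerivAt_apply (𝕜 := ℝ) 5 x),
    grad_Tkin hκ₂ hr hθ]
  simp

end Brackets

/-- each of the six generators of the geodesic polar realization
Poisson commutes with the kinetic energy T at every point of D. -/
theorem generators_commute_with_kinetic_energy (κ₁ κ₂ : ℝ) (hκ₂ : κ₂ ≠ 0) :
    ∀ x ∈ D κ₁ κ₂,
      pb (J01 κ₁ κ₂) (Tkin κ₁ κ₂) x = 0 ∧
      pb (J02 κ₁ κ₂) (Tkin κ₁ κ₂) x = 0 ∧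
      pb (J03 κ₁ κ₂) (Tkin κ₁ κ₂) x = 0 ∧
      pb (J12 κ₂) (Tkin κ₁ κ₂) x = 0 ∧
      pb (J13 κ₂) (Tkin κ₁ κ₂) x = 0 ∧
      pb J23 (Tkin κ₁ κ₂) x = 0 := fun _ hx =>
  ⟨pb_J01_Tkin hκ₂ hx, pb_J02_Tkin hκ₂ hx, pb_J03_Tkin hκ₂ hx, pb_J12_Tkin hκ₂ hx,
    pb_J13_Tkin hκ₂ hx, pb_J23_Tkin hκ₂ hx.1 hx.2.2.1⟩

end
end Paper
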